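/- arXiv:2404.03715 — 3 statements merged into one kernel-verified Lean document; each statement's English description precedes it below -/
import Mathlib

section
/- For probability distributions p and q on a finite set, E_{y∼p}[(log(p(y)/q(y)))²] + E_{y∼q}[(log(p(y)/q(y)))²] ≥ c·(TV(p,q))² for some absolute constant c > 0 (e.g., c = 2 works). -/
open Finset

lemma key_pt (x : ℝ) (hx : 0 < x) : |x - 1| ≤ (1 + x) * |Real.log x| := by
  rcases le_or_gt 1 x with h | h
  · have hlog : 0 ≤ Real.log x := Real.log_nonneg h
    rw [abs_of_nonneg (by linarith), abs_of_nonneg hlog]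
    have h1 : 1 - 1/x ≤ Real.log x := by
      have := Real.log_le_sub_one_of_pos (x := 1/x) (by positivity)
      have hlx : Real.log (1/x) = - Real.log x := by
        rw [one_div, Real.log_inv]
      linarith
    have h2 : (1 + x) * (1 - 1/x) ≤ (1 + x) * Real.log x :=
      mul_le_mul_of_nonneg_left h1 (by linarith)
    have h3 : (1 + x) * (1 - 1/x) = (1 + x) * (x - 1) / x := by
      field_simp
    have h4 : x - 1 ≤ (1 + x) * (x - 1) / x := by
      rw [le_div_iff₀ hx]; nlinarith
    linarith
  · have hlog : Real.log x ≤ 0 := Real.log_nonpos hx.le h.le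
    rw [abs_of_nonpos (by linarith), abs_of_nonpos hlog]
    have h1 : Real.log x ≤ x - 1 := Real.log_le_sub_one_of_pos hx
    nlinarith

lemma jensen {Y : Type} [Fintype Y] (w f : Y → ℝ) (hw : ∀ y, 0 ≤ w y)
    (h1 : ∑ y, w y = 1) : (∑ y, w y * |f y|) ^ 2 ≤ ∑ y, w y * (f y) ^ 2 := by
  have hcs := Finset.sum_mul_sq_le_sq_mul_sq Finset.univ
    (fun y => Real.sqrt (w y)) (fun y => Real.sqrt (w y) * |f y|)
  have e1 : ∀ y : Y, Real.sqrt (w y) * (Real.sqrt (w y) * |f y|) = w y * |f y| := by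
    intro y; rw [← mul_assoc, Real.mul_self_sqrt (hw y)]
  have e2 : ∀ y : Y, (Real.sqrt (w y)) ^ 2 = w y := fun y => Real.sq_sqrt (hw y)
  have e3 : ∀ y : Y, (Real.sqrt (w y) * |f y|) ^ 2 = w y * (f y) ^ 2 := by
    intro y; rw [mul_pow, Real.sq_sqrt (hw y), sq_abs]
  simp only [e1, e2, e3] at hcs
  rw [h1, one_mul] at hcs
  exact hcs

theorem stmt_2 :
    ∃ c : ℝ, 0 < c ∧
      ∀ (Y : Type) [Fintype Y] (p q : Y → ℝ),
        (∀ y, 0 < p y) → (∀ y, 0 < q y) →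
        (∑ y, p y = 1) → (∑ y, q y = 1) →
        c * ((1 / 2) * ∑ y, |p y - q y|) ^ 2 ≤
          (∑ y, p y * (Real.log (p y / q y)) ^ 2) +
            ∑ y, q y * (Real.log (p y / q y)) ^ 2 := by
  refine ⟨2, by norm_num, ?_⟩
  intro Y _ p q hp hq hps hqs
  set L : Y → ℝ := fun y => Real.log (p y / q y) with hL
  set a : ℝ := ∑ y, p y * |L y| with ha
  set b : ℝ := ∑ y, q y * |L y| with hb
  have hS : ∑ y, |p y - q y| ≤ a + b := by
    rw [ha, hb, ← Finset.sum_add_distrib]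
    apply Finset.sum_le_sum
    intro y _
    have hx : 0 < p y / q y := div_pos (hp y) (hq y)
    have := key_pt (p y / q y) hx
    have h2 : q y * |p y / q y - 1| ≤ q y * ((1 + p y / q y) * |L y|) :=
      mul_le_mul_of_nonneg_left this (hq y).le
    have h3 : q y * |p y / q y - 1| = |p y - q y| := by
      have e : p y / q y - 1 = (p y - q y) / q y := div_sub_one (hq y).ne'
      rw [e, abs_div, abs_of_pos (hq y), mul_comm, div_mul_cancel₀ _ (hq y).ne']
    have h4 : q y * ((1 + p y / q y) * |L y|) = p y * |L y| + q y * |L y| := by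
      have e : q y * (1 + p y / q y) = q y + p y := by
        rw [mul_add, mul_one, mul_div_cancel₀ _ (hq y).ne']
      rw [← mul_assoc, e]; ring
    linarith [h3 ▸ h2, h4 ▸ h2]
  have hja : a ^ 2 ≤ ∑ y, p y * (L y) ^ 2 := jensen p L (fun y => (hp y).le) hps
  have hjb : b ^ 2 ≤ ∑ y, q y * (L y) ^ 2 := jensen q L (fun y => (hq y).le) hqs
  have hab : (a + b) ^ 2 / 2 ≤ a ^ 2 + b ^ 2 := by nlinarith [sq_nonneg (a - b)]
  have hS0 : 0 ≤ ∑ y, |p y - q y| := Finset.sum_nonneg fun y _ => abs_nonneg _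
  have h5 : 2 * ((1 / 2) * ∑ y, |p y - q y|) ^ 2 ≤ (a + b) ^ 2 / 2 := by
    have := sq_le_sq' (by linarith : -(a+b) ≤ ∑ y, |p y - q y|) hS
    nlinarith
  linarith
end

section
/- For probability distributions p, q on a finite set, E_{y₁∼p, y₂∼q}[(log(p(y₁)/q(y₁)) − log(p(y₂)/q(y₂)))²] ≥ c·(TV(p,q))² for some absolute constant c > 0. -/
/-- Pointwise bound: for `0 < b ≤ a`, `a * (log (a/b))^2 ≥ 4 (√a - √b)^2`. -/
lemma aux_log_sq (a b : ℝ) (ha : 0 < a) (hb : 0 < b) (hab : b ≤ a) :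
    4 * (Real.sqrt a - Real.sqrt b) ^ 2 ≤ a * (Real.log (a / b)) ^ 2 := by
  set sa := Real.sqrt a with hsa_def
  set sb := Real.sqrt b with hsb_def
  have hsa : 0 < sa := Real.sqrt_pos.mpr ha
  have hsb : 0 < sb := Real.sqrt_pos.mpr hb
  have hsab : sb ≤ sa := Real.sqrt_le_sqrt hab
  have hsa2 : sa ^ 2 = a := Real.sq_sqrt ha.le
  -- log (a/b) ≥ 2 (sa - sb) / sa
  have h1 : Real.log (sb / sa) ≤ sb / sa - 1 :=
    Real.log_le_sub_one_of_pos (by positivity)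
  have h2 : Real.log (a / b) = -2 * Real.log (sb / sa) := by
    rw [Real.log_div hsb.ne' hsa.ne', Real.log_div (ne_of_gt ha) (ne_of_gt hb),
      hsa_def, hsb_def, Real.log_sqrt ha.le, Real.log_sqrt hb.le]
    ring
  have hlog : 2 * (sa - sb) / sa ≤ Real.log (a / b) := by
    rw [h2]
    have heq : 2 * (sa - sb) / sa = -2 * (sb / sa - 1) := by
      field_simp [hsa.ne']
      ring
    rw [heq]
    nlinarith [h1]
  have hnn : 0 ≤ 2 * (sa - sb) / sa := by
    have : 0 ≤ sa - sb := by linarith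
    positivity
  have hsq : (2 * (sa - sb) / sa) ^ 2 ≤ (Real.log (a / b)) ^ 2 :=
    pow_le_pow_left₀ hnn hlog 2
  have hval : a * ((2 * (sa - sb) / sa) ^ 2) = 4 * (sa - sb) ^ 2 := by
    rw [div_pow]
    rw [show (2 * (sa - sb)) ^ 2 = 4 * (sa - sb) ^ 2 by ring]
    rw [← hsa2]
    field_simp
  nlinarith [mul_le_mul_of_nonneg_left hsq ha.le]

/-- Gibbs' inequality, one-sided form. -/
lemma gibbs_aux (Y : Type) [Fintype Y] (p q : Y → ℝ)
    (hp : ∀ y, 0 < p y) (hq : ∀ y, 0 < q y)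
    (hp1 : ∑ y, p y = 1) (hq1 : ∑ y, q y = 1) :
    ∑ y, q y * Real.log (p y / q y) ≤ 0 := by
  have h1 : ∑ y, q y * Real.log (p y / q y) ≤ ∑ y, (p y - q y) := by
    apply Finset.sum_le_sum
    intro y _
    have hlog : Real.log (p y / q y) ≤ p y / q y - 1 :=
      Real.log_le_sub_one_of_pos (div_pos (hp y) (hq y))
    have := mul_le_mul_of_nonneg_left hlog (hq y).le
    calc q y * Real.log (p y / q y) ≤ q y * (p y / q y - 1) := this
      _ = p y - q y := by field_simp [(hq y).ne']
  rw [Finset.sum_sub_distrib, hp1, hq1] at h1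
  linarith

theorem stmt_5 :
    ∃ c : ℝ, 0 < c ∧
      ∀ (Y : Type) [Fintype Y] (p q : Y → ℝ),
        (∀ y, 0 < p y) → (∀ y, 0 < q y) →
        (∑ y, p y = 1) → (∑ y, q y = 1) →
        c * ((1 / 2) * ∑ y, |p y - q y|) ^ 2 ≤
          ∑ y₁, ∑ y₂, p y₁ * q y₂ *
            (Real.log (p y₁ / q y₁) - Real.log (p y₂ / q y₂)) ^ 2 := by
  refine ⟨4, by norm_num, ?_⟩
  intro Y _ p q hp hq hp1 hq1
  set f : Y → ℝ := fun y => Real.log (p y / q y) with hf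
  set A := ∑ y, p y * f y with hA
  set B := ∑ y, q y * f y with hB
  set P2 := ∑ y, p y * f y ^ 2 with hP2
  set Q2 := ∑ y, q y * f y ^ 2 with hQ2
  -- Step 1: expand the double sum
  have expand : (∑ y₁, ∑ y₂, p y₁ * q y₂ * (f y₁ - f y₂) ^ 2)
      = P2 + Q2 - 2 * A * B := by
    have h1 : ∀ y₁ : Y, ∑ y₂, p y₁ * q y₂ * (f y₁ - f y₂) ^ 2
        = p y₁ * f y₁ ^ 2 - (2 * B) * (p y₁ * f y₁) + Q2 * p y₁ := by
      intro y₁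
      have hterm : ∀ y₂ ∈ Finset.univ, p y₁ * q y₂ * (f y₁ - f y₂) ^ 2
          = (p y₁ * f y₁ ^ 2) * q y₂ - (2 * (p y₁ * f y₁)) * (q y₂ * f y₂)
            + p y₁ * (q y₂ * f y₂ ^ 2) := fun y₂ _ => by ring
      rw [Finset.sum_congr rfl hterm, Finset.sum_add_distrib, Finset.sum_sub_distrib,
        ← Finset.mul_sum, ← Finset.mul_sum, ← Finset.mul_sum, hq1, ← hB, ← hQ2]
      ring
    rw [Finset.sum_congr rfl (fun y₁ _ => h1 y₁), Finset.sum_add_distrib,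
      Finset.sum_sub_distrib, ← Finset.mul_sum, ← Finset.mul_sum, hp1, ← hA, ← hP2]
    ring
  -- Step 2: cross term is nonnegative
  have hApos : 0 ≤ A := by
    have h := gibbs_aux Y q p hq hp hq1 hp1
    have hconv : ∑ y, p y * Real.log (q y / p y) = -A := by
      rw [hA, ← Finset.sum_neg_distrib]
      apply Finset.sum_congr rfl
      intro y _
      rw [hf]
      rw [show q y / p y = (p y / q y)⁻¹ by rw [inv_div], Real.log_inv]
      ring
    rw [hconv] at h
    linarith
  have hBneg : B ≤ 0 := gibbs_aux Y p q hp hq hp1 hq1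
  have hcross : 2 * A * B ≤ 0 := by nlinarith
  -- Step 3: pointwise bound
  have hpoint : ∀ y, 4 * (Real.sqrt (p y) - Real.sqrt (q y)) ^ 2
      ≤ p y * f y ^ 2 + q y * f y ^ 2 := by
    intro y
    rcases le_total (q y) (p y) with h | h
    · have := aux_log_sq (p y) (q y) (hp y) (hq y) h
      nlinarith [sq_nonneg (f y), (hq y).le]
    · have haux := aux_log_sq (q y) (p y) (hq y) (hp y) h
      have heq : (Real.log (q y / p y)) ^ 2 = f y ^ 2 := by
        rw [hf, show q y / p y = (p y / q y)⁻¹ by rw [inv_div], Real.log_inv, neg_sq]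
      rw [heq] at haux
      have hsym : (Real.sqrt (q y) - Real.sqrt (p y)) ^ 2
          = (Real.sqrt (p y) - Real.sqrt (q y)) ^ 2 := by ring
      rw [hsym] at haux
      nlinarith [sq_nonneg (f y), (hp y).le]
  have hstep3 : ∑ y, 4 * (Real.sqrt (p y) - Real.sqrt (q y)) ^ 2 ≤ P2 + Q2 := by
    rw [hP2, hQ2, ← Finset.sum_add_distrib]
    exact Finset.sum_le_sum fun y _ => hpoint y
  -- Step 4: Cauchy–Schwarz
  set T := ∑ y, |p y - q y| with hT
  have hstep4 : T ^ 2 ≤ ∑ y, 4 * (Real.sqrt (p y) - Real.sqrt (q y)) ^ 2 := by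
    have habs : ∀ y, |p y - q y|
        = |Real.sqrt (p y) - Real.sqrt (q y)| * (Real.sqrt (p y) + Real.sqrt (q y)) := by
      intro y
      have hsp : Real.sqrt (p y) ^ 2 = p y := Real.sq_sqrt (hp y).le
      have hsq' : Real.sqrt (q y) ^ 2 = q y := Real.sq_sqrt (hq y).le
      have hfac : p y - q y = (Real.sqrt (p y) - Real.sqrt (q y))
          * (Real.sqrt (p y) + Real.sqrt (q y)) := by
        linear_combination (-1 : ℝ) * hsp + hsq'
      rw [hfac, abs_mul]
      congr 1
      exact abs_of_nonneg (by positivity)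
    have hcs : (∑ y, |Real.sqrt (p y) - Real.sqrt (q y)|
        * (Real.sqrt (p y) + Real.sqrt (q y))) ^ 2
        ≤ (∑ y, |Real.sqrt (p y) - Real.sqrt (q y)| ^ 2)
          * ∑ y, (Real.sqrt (p y) + Real.sqrt (q y)) ^ 2 :=
      Finset.sum_mul_sq_le_sq_mul_sq _ _ _
    have h4 : ∑ y, (Real.sqrt (p y) + Real.sqrt (q y)) ^ 2 ≤ 4 := by
      have hterm : ∀ y ∈ Finset.univ, (Real.sqrt (p y) + Real.sqrt (q y)) ^ 2
          ≤ 2 * (p y + q y) := by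
        intro y _
        have hsp : Real.sqrt (p y) ^ 2 = p y := Real.sq_sqrt (hp y).le
        have hsq' : Real.sqrt (q y) ^ 2 = q y := Real.sq_sqrt (hq y).le
        nlinarith [sq_nonneg (Real.sqrt (p y) - Real.sqrt (q y))]
      calc ∑ y, (Real.sqrt (p y) + Real.sqrt (q y)) ^ 2
          ≤ ∑ y, 2 * (p y + q y) := Finset.sum_le_sum hterm
        _ = 4 := by rw [← Finset.mul_sum, Finset.sum_add_distrib, hp1, hq1]; norm_num
    have habs_sq : ∀ y, |Real.sqrt (p y) - Real.sqrt (q y)| ^ 2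
        = (Real.sqrt (p y) - Real.sqrt (q y)) ^ 2 := fun y => sq_abs _
    have hD_nonneg : 0 ≤ ∑ y, (Real.sqrt (p y) - Real.sqrt (q y)) ^ 2 :=
      Finset.sum_nonneg fun y _ => sq_nonneg _
    calc T ^ 2 = (∑ y, |Real.sqrt (p y) - Real.sqrt (q y)|
          * (Real.sqrt (p y) + Real.sqrt (q y))) ^ 2 := by
          rw [hT]; congr 1; exact Finset.sum_congr rfl fun y _ => habs y
      _ ≤ (∑ y, (Real.sqrt (p y) - Real.sqrt (q y)) ^ 2)
          * ∑ y, (Real.sqrt (p y) + Real.sqrt (q y)) ^ 2 := by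
          simpa only [habs_sq] using hcs
      _ ≤ (∑ y, (Real.sqrt (p y) - Real.sqrt (q y)) ^ 2) * 4 :=
          mul_le_mul_of_nonneg_left h4 hD_nonneg
      _ = ∑ y, 4 * (Real.sqrt (p y) - Real.sqrt (q y)) ^ 2 := by
          rw [mul_comm, Finset.mul_sum]
  -- Combine
  have hgoal : 4 * ((1 / 2) * T) ^ 2 = T ^ 2 := by ring
  rw [← hT] at *
  calc 4 * ((1 / 2) * T) ^ 2 = T ^ 2 := hgoal
    _ ≤ ∑ y, 4 * (Real.sqrt (p y) - Real.sqrt (q y)) ^ 2 := hstep4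
    _ ≤ P2 + Q2 := hstep3
    _ ≤ P2 + Q2 - 2 * A * B := by linarith
    _ = _ := expand.symm
end

section
/- Let π_t be a fully supported distribution on a finite set Y, r: Y → [0,1], η > 0, and let π⋆ = (1/Z)·π_t·exp(r/η) be the soft policy iteration target. Define ℓ(μ) = E_{y∼μ, y'∼π_t}[P(y ≻ y')] − η·KL(μ‖π_t) where P(y ≻ y') ∈ [0,1] is a preference function satisfying P(y ≻ y') + P(y' ≻ y) = 1 and r(y) = E_{y'∼π_t}[P(y ≻ y')]. Then E_{y∼π⋆, y'∼π_t}[P(y ≻ y')] ≥ 1/2 + η·KL(π⋆‖π_t). -/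
theorem stmt_9 {Y : Type*} [Fintype Y] [Nonempty Y]
    (πt : Y → ℝ) (hπt : ∀ y, 0 < πt y) (hπts : ∑ y, πt y = 1)
    (P : Y → Y → ℝ) (hP01 : ∀ y y', P y y' ∈ Set.Icc (0 : ℝ) 1)
    (hPsym : ∀ y y', P y y' + P y' y = 1)
    (r : Y → ℝ) (hr : ∀ y, r y = ∑ y', πt y' * P y y')
    (η : ℝ) (hη : 0 < η)
    (πstar : Y → ℝ)
    (hdef : ∀ y, πstar y = πt y * Real.exp (r y / η) / ∑ y', πt y' * Real.exp (r y' / η)) :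
    1 / 2 + η * ∑ y, πstar y * Real.log (πstar y / πt y) ≤
      ∑ y, ∑ y', πstar y * πt y' * P y y' := by
  set Z : ℝ := ∑ y', πt y' * Real.exp (r y' / η) with hZdef
  have hZ : 0 < Z := Finset.sum_pos (fun y _ => mul_pos (hπt y) (Real.exp_pos _))
    Finset.univ_nonempty
  -- sum of πstar = 1
  have hsum1 : ∑ y, πstar y = 1 := by
    simp only [hdef, ← Finset.sum_div]
    exact div_self hZ.ne'
  -- log ratio
  have hlog : ∀ y, Real.log (πstar y / πt y) = r y / η - Real.log Z := by
    intro y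
    have : πstar y / πt y = Real.exp (r y / η) / Z := by
      rw [hdef y, div_div, mul_comm Z (πt y), ← div_div, mul_comm (πt y),
        mul_div_assoc, div_self (hπt y).ne', mul_one]
    rw [this, Real.log_div (Real.exp_ne_zero _) hZ.ne', Real.log_exp]
  -- rewrite KL term
  have hKL : ∑ y, πstar y * Real.log (πstar y / πt y)
      = (∑ y, πstar y * r y) / η - Real.log Z := by
    have : ∀ y, πstar y * Real.log (πstar y / πt y)
        = πstar y * r y / η - πstar y * Real.log Z := by
      intro y; rw [hlog y]; ring
    rw [Finset.sum_congr rfl (fun y _ => this y), Finset.sum_sub_distrib,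
      ← Finset.sum_div, ← Finset.sum_mul, hsum1, one_mul]
  -- RHS as expectation of r
  have hRHS : ∑ y, ∑ y', πstar y * πt y' * P y y' = ∑ y, πstar y * r y := by
    refine Finset.sum_congr rfl fun y _ => ?_
    rw [hr y, Finset.mul_sum]
    exact Finset.sum_congr rfl fun y' _ => by ring
  -- ∑ πt r = 1/2
  have hhalf : ∑ y, πt y * r y = 1 / 2 := by
    have hS : ∑ y, πt y * r y = ∑ y, ∑ y', πt y * πt y' * P y y' := by
      refine Finset.sum_congr rfl fun y _ => ?_
      rw [hr y, Finset.mul_sum]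
      exact Finset.sum_congr rfl fun y' _ => by ring
    have hswap : ∑ y, ∑ y', πt y * πt y' * P y y'
        = ∑ y, ∑ y', πt y * πt y' * P y' y := by
      rw [Finset.sum_comm]
      exact Finset.sum_congr rfl fun y _ => Finset.sum_congr rfl fun y' _ => by ring
    have htot : (∑ y, ∑ y', πt y * πt y' * P y y')
        + (∑ y, ∑ y', πt y * πt y' * P y' y) = 1 := by
      rw [← Finset.sum_add_distrib]
      have : ∀ y : Y, (∑ y', πt y * πt y' * P y y') + (∑ y', πt y * πt y' * P y' y)
          = πt y := by
        intro y
        rw [← Finset.sum_add_distrib]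
        have : ∀ y' : Y, πt y * πt y' * P y y' + πt y * πt y' * P y' y
            = πt y * πt y' := by
          intro y'
          rw [mul_assoc, mul_assoc, ← mul_add, ← mul_add, hPsym y y', mul_one]
        rw [Finset.sum_congr rfl (fun y' _ => this y'), ← Finset.mul_sum, hπts, mul_one]
      rw [Finset.sum_congr rfl (fun y _ => this y), hπts]
    rw [hS]
    linarith [htot, hswap]
  -- Jensen: log Z ≥ ∑ πt (r/η)
  have hjensen : ∑ y, πt y * (r y / η) ≤ Real.log Z := by
    have hexp : Real.exp (∑ y, πt y * (r y / η)) ≤ Z := by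
      have := convexOn_exp.map_sum_le (t := Finset.univ)
        (w := πt) (p := fun y => r y / η)
        (fun y _ => (hπt y).le) hπts (fun y _ => Set.mem_univ _)
      simpa [smul_eq_mul] using this
    calc ∑ y, πt y * (r y / η) = Real.log (Real.exp (∑ y, πt y * (r y / η))) := by
          rw [Real.log_exp]
      _ ≤ Real.log Z := Real.log_le_log (Real.exp_pos _) hexp
  have hlogZ : 1 / 2 ≤ η * Real.log Z := by
    have h1 : ∑ y, πt y * (r y / η) = (1 / 2) / η := by
      rw [← hhalf, Finset.sum_div]
      exact Finset.sum_congr rfl fun y _ => (mul_div_assoc _ _ _).symm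
    rw [h1] at hjensen
    calc 1 / 2 = η * ((1 / 2) / η) := by field_simp
      _ ≤ η * Real.log Z := by exact mul_le_mul_of_nonneg_left hjensen hη.le
  rw [hKL, hRHS]
  have : η * ((∑ y, πstar y * r y) / η - Real.log Z)
      = (∑ y, πstar y * r y) - η * Real.log Z := by field_simp
  rw [this]
  linarith
end
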